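/- Case-II conditional lower bound for Ψ(t) = 1 − t (from the proof of Theorem 4.3): let Ψ(t) = 1 − t and let i ∈ [n] satisfy p_i = max_{y∈[n]} p_y and h_i = max_{y∈[n]} h_y. Then ΔC_Ψ(h) ≥ (p_{n+1} − p_i)·s_i(h), where s_i(h) = exp(h_i)/Σ_{y'∈Ȳ} exp(h_{y'}). -/

import Mathlib

open Real

/-- Softmax of a score vector. -/
noncomputable def smax {m : ℕ} (v : Fin m → ℝ) (y : Fin m) : ℝ :=
  Real.exp (v y) / ∑ y' : Fin m, Real.exp (v y')

/-- Conditional RL2D error `C_Ψ(h) = Σ_y [ q_y Ψ(s_y) + (p_y − q_y) Ψ(s_y + s_{n+1}) ]`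
with `q_y = p_y c_y`; label `Fin.last n` is the deferral label. -/
noncomputable def condC {n : ℕ} (Ψ : ℝ → ℝ) (p c : Fin n → ℝ) (v : Fin (n + 1) → ℝ) : ℝ :=
  ∑ y : Fin n, (p y * c y * Ψ (smax v y.castSucc)
    + (p y - p y * c y) * Ψ (smax v y.castSucc + smax v (Fin.last n)))

/-- Conditional regret `ΔC_Ψ(h) = C_Ψ(h) − inf_{h'} C_Ψ(h')`. -/
noncomputable def condRegret {n : ℕ} (Ψ : ℝ → ℝ) (p c : Fin n → ℝ)
    (v : Fin (n + 1) → ℝ) : ℝ :=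
  condC Ψ p c v - ⨅ v' : Fin (n + 1) → ℝ, condC Ψ p c v'

/-- `P(k)`: `p_k` for `k ∈ [n]` and `p_{n+1} = Σ_y p_y (1 − c_y)` for the deferral label. -/
noncomputable def Pfull {n : ℕ} (p c : Fin n → ℝ) (k : Fin (n + 1)) : ℝ :=
  if h : k = Fin.last n then ∑ y : Fin n, p y * (1 - c y) else p (k.castPred h)

/-- Conditional deferral regret `ΔC_def = max{max_y p_y, p_{n+1}} − P(k)`. -/
noncomputable def defRegret {n : ℕ} (p c : Fin n → ℝ) (k : Fin (n + 1)) : ℝ :=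
  max (⨆ y : Fin n, p y) (∑ y : Fin n, p y * (1 - c y)) - Pfull p c k

/-!
For `Ψ(t) = 1 - t` the error is affine in the softmax, `C(h) = Σ_y p_y - Σ_k P(k) s_k(h)`, and
concentrating the softmax on a single label `j` drives it to `Σ_y p_y - P(j)`. Hence the regret
is at least `P(j) - Σ_k P(k) s_k(h)` for every label `j`. Since `p_i` is the largest `p_y`,
`Σ_k P(k) s_k ≤ p_i (1 - s_{n+1}) + p_{n+1} s_{n+1}`; taking `j = i` if `p_i ≥ p_{n+1}` and
`j = n + 1` otherwise, and using `s_i ≤ 1 - s_{n+1}`, gives the bound.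
-/

open Filter Topology

lemma smax_nonneg {m : ℕ} (v : Fin m → ℝ) (y : Fin m) : 0 ≤ smax v y := by
  unfold smax; positivity

lemma sum_smax {m : ℕ} [NeZero m] (v : Fin m → ℝ) : ∑ k, smax v k = 1 := by
  unfold smax
  rw [← Finset.sum_div, div_self]
  exact (Finset.sum_pos (fun k _ => exp_pos _) Finset.univ_nonempty).ne'

lemma sum_mul_smax_le {m : ℕ} [NeZero m] (a : Fin m → ℝ) {M : ℝ} (ha : ∀ k, a k ≤ M)
    (v : Fin m → ℝ) : ∑ k, a k * smax v k ≤ M :=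
  calc ∑ k, a k * smax v k ≤ ∑ k, M * smax v k :=
        Finset.sum_le_sum fun k _ => mul_le_mul_of_nonneg_right (ha k) (smax_nonneg v k)
    _ = M := by rw [← Finset.mul_sum, sum_smax, mul_one]

lemma tendsto_smax_concentrate {m : ℕ} (j k : Fin m) :
    Tendsto (fun t : ℝ => smax (fun l => if l = j then 0 else -t) k) atTop
      (𝓝 (if k = j then 1 else 0)) := by
  have hexp : ∀ l, Tendsto (fun t : ℝ => exp (if l = j then 0 else -t)) atTop
      (𝓝 (if l = j then 1 else 0)) := by
    intro l
    by_cases hl : l = j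
    · simp [hl]
    · simpa [hl] using tendsto_exp_neg_atTop_nhds_zero
  have hden := tendsto_finsetSum Finset.univ fun l _ => hexp l
  rw [Finset.sum_ite_eq' Finset.univ j, if_pos (Finset.mem_univ j)] at hden
  have := (hexp k).div hden one_ne_zero
  rw [div_one] at this
  exact this

lemma tendsto_sum_mul_smax_concentrate {m : ℕ} (a : Fin m → ℝ) (j : Fin m) :
    Tendsto (fun t : ℝ => ∑ k, a k * smax (fun l => if l = j then 0 else -t) k) atTop
      (𝓝 (a j)) := by
  have := tendsto_finsetSum Finset.univ fun k _ =>
    (tendsto_smax_concentrate j k).const_mul (a k)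
  simpa using this

lemma iInf_sub_sum_mul_smax_le {m : ℕ} [NeZero m] (K : ℝ) (a : Fin m → ℝ) (j : Fin m) :
    ⨅ v : Fin m → ℝ, (K - ∑ k, a k * smax v k) ≤ K - a j := by
  -- without a lower bound `⨅` would take the junk value `0`
  obtain ⟨M, hM⟩ := Finite.bddAbove_range a
  have hbdd : BddBelow (Set.range fun v : Fin m → ℝ => K - ∑ k, a k * smax v k) := by
    refine ⟨K - M, ?_⟩
    rintro _ ⟨v, rfl⟩
    linarith [sum_mul_smax_le a (fun k => hM ⟨k, rfl⟩) v]
  exact ge_of_tendsto' ((tendsto_sum_mul_smax_concentrate a j).const_sub K)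
    fun t => ciInf_le hbdd _

lemma sum_mul_smax_le_mix {n : ℕ} (a : Fin (n + 1) → ℝ) (i : Fin n)
    (hai : ∀ y : Fin n, a y.castSucc ≤ a i.castSucc) (v : Fin (n + 1) → ℝ) :
    ∑ k, a k * smax v k
      ≤ a i.castSucc * (1 - smax v (Fin.last n)) + a (Fin.last n) * smax v (Fin.last n) := by
  have hsum := sum_smax v
  rw [Fin.sum_univ_castSucc] at hsum ⊢
  have : ∑ y : Fin n, a y.castSucc * smax v y.castSucc
      ≤ ∑ y : Fin n, a i.castSucc * smax v y.castSucc :=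
    Finset.sum_le_sum fun y _ => mul_le_mul_of_nonneg_right (hai y) (smax_nonneg v _)
  rw [← Finset.mul_sum, show ∑ y : Fin n, smax v y.castSucc = 1 - smax v (Fin.last n) by
    linarith] at this
  linarith

lemma smax_castSucc_le_one_sub_smax_last {n : ℕ} (v : Fin (n + 1) → ℝ) (i : Fin n) :
    smax v i.castSucc ≤ 1 - smax v (Fin.last n) := by
  have hsum := sum_smax v
  rw [Fin.sum_univ_castSucc] at hsum
  have := Finset.single_le_sum (f := fun y : Fin n => smax v y.castSucc)
    (fun y _ => smax_nonneg v _) (Finset.mem_univ i)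
  linarith

lemma Pfull_castSucc {n : ℕ} (p c : Fin n → ℝ) (y : Fin n) : Pfull p c y.castSucc = p y := by
  simp [Pfull, Fin.castSucc_ne_last]

lemma Pfull_last {n : ℕ} (p c : Fin n → ℝ) :
    Pfull p c (Fin.last n) = ∑ y, p y * (1 - c y) := by
  simp [Pfull]

lemma condC_one_sub_eq {n : ℕ} (p c : Fin n → ℝ) (v : Fin (n + 1) → ℝ) :
    condC (fun t => 1 - t) p c v = ∑ y, p y - ∑ k, Pfull p c k * smax v k := by
  rw [Fin.sum_univ_castSucc, Pfull_last, Finset.sum_mul, condC]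
  simp only [Pfull_castSucc, ← Finset.sum_add_distrib, ← Finset.sum_sub_distrib]
  exact Finset.sum_congr rfl fun y _ => by ring

lemma condRegret_one_sub_ge {n : ℕ} (p c : Fin n → ℝ) (v : Fin (n + 1) → ℝ)
    (j : Fin (n + 1)) :
    Pfull p c j - ∑ k, Pfull p c k * smax v k ≤ condRegret (fun t => 1 - t) p c v := by
  have := iInf_sub_sum_mul_smax_le (∑ y, p y) (Pfull p c) j
  simp only [condRegret, condC_one_sub_eq] at this ⊢
  linarith

theorem caseII_bound_one_sub_general {n : ℕ} (p c : Fin n → ℝ)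
    (v : Fin (n + 1) → ℝ) (i : Fin n)
    (hpi : ∀ y : Fin n, p y ≤ p i) :
    condRegret (fun t => 1 - t) p c v ≥
      ((∑ y : Fin n, p y * (1 - c y)) - p i) * smax v i.castSucc := by
  have hmix := sum_mul_smax_le_mix (Pfull p c) i (by simpa only [Pfull_castSucc] using hpi) v
  rw [Pfull_castSucc, Pfull_last] at hmix
  have hsi := smax_nonneg v i.castSucc
  have hslast := smax_nonneg v (Fin.last n)
  rcases le_total (∑ y, p y * (1 - c y)) (p i) with hP | hP
  · have hreg := condRegret_one_sub_ge p c v i.castSucc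
    rw [Pfull_castSucc] at hreg
    nlinarith
  · have hreg := condRegret_one_sub_ge p c v (Fin.last n)
    rw [Pfull_last] at hreg
    nlinarith [smax_castSucc_le_one_sub_smax_last v i]

/-- Case-II conditional lower bound for Ψ(t) = 1 − t (from the proof of
Theorem 4.3): if i ∈ [n] satisfies p_i = max_{y∈[n]} p_y and h_i = max_{y∈[n]} h_y,
then ΔC_Ψ(h) ≥ (p_{n+1} − p_i)·s_i(h). -/
theorem caseII_bound_one_sub {n : ℕ} (hn : 2 ≤ n) (p c : Fin n → ℝ)
    (hp0 : ∀ y, 0 ≤ p y) (hp1 : ∑ y : Fin n, p y = 1)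
    (hc : ∀ y, c y ∈ Set.Icc (0 : ℝ) 1)
    (v : Fin (n + 1) → ℝ) (i : Fin n)
    (hpi : ∀ y : Fin n, p y ≤ p i)
    (hvi : ∀ y : Fin n, v y.castSucc ≤ v i.castSucc) :
    condRegret (fun t => 1 - t) p c v ≥
      ((∑ y : Fin n, p y * (1 - c y)) - p i) * smax v i.castSucc :=
  caseII_bound_one_sub_general p c v i hpi
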